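/- Let a : ℕ → ℂ satisfy Σ_{α ≥ 0} |a(α)| < ∞ and define f : [−1, 1] → ℂ by f(t) := a(0) + 2·Σ_{α ≥ 1} a(α)·T_α(t), where T_α denotes the Chebyshev polynomial of the first kind (T_α(cos θ) = cos(αθ)). Define the sequence S(a) : ℕ → ℂ by S(a)(0) := a(0) − a(1)/2 − 2·Σ_{β ≥ 2} (−1)^β·a(β)/(β² − 1) and S(a)(α) := (a(α−1) − a(α+1))/(2α) for α ≥ 1. Then Σ_{α ≥ 0} |S(a)(α)| < ∞ and for every t ∈ [−1, 1], ∫_{−1}^t f(r) dr = S(a)(0) + 2·Σ_{α ≥ 1} S(a)(α)·T_α(t). -/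

import Mathlib

/-!
Since `T_n' = n U_{n-1}` and `2 T_n = U_n - U_{n-2}`, the primitive of `T_n` vanishing at `-1` is
`T_{n+1}/(2(n+1)) - T_{n-1}/(2(n-1)) - (-1)^n/(n^2-1)` for `n ≥ 2`, and `(T_2 - 1)/4`, `T_1 + 1`
for `n = 1, 0`. Absolute summability of `a` bounds every term by `|a α|` on `[-1, 1]`, so the
series can be integrated term by term; collecting the coefficient of each `T_m` gives
`(a (m-1) - a (m+1))/(2m)`, and the constants add up to `S(a)(0)`.
-/

open Set Polynomial.Chebyshev

/-- The Chebyshev integration operator `S`: `S(a)(0) = a 0 − a 1 / 2 −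
2 Σ_{β ≥ 2} (−1)^β a β / (β² − 1)` and `S(a)(α) = (a (α−1) − a (α+1))/(2α)`
for `α ≥ 1`. -/
noncomputable def chebIntegrate (a : ℕ → ℂ) : ℕ → ℂ
  | 0 => a 0 - a 1 / 2 -
      2 * ∑' β : ℕ, (-1 : ℂ) ^ (β + 2) * a (β + 2) / ((((β : ℕ) + 2 : ℕ) : ℂ) ^ 2 - 1)
  | (α + 1) => (a α - a (α + 2)) / (2 * ((α : ℂ) + 1))

noncomputable def chebSeries (a : ℕ → ℂ) (t : ℝ) : ℂ :=
  a 0 + 2 * ∑' α : ℕ, a (α + 1) * (((T ℝ ((α : ℤ) + 1)).eval t : ℝ) : ℂ)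

theorem Summable.mul_of_norm_le_one {ι R : Type*} [NormedRing R] [CompleteSpace R] {a g : ι → R}
    (ha : Summable fun i => ‖a i‖) (hg : ∀ i, ‖g i‖ ≤ 1) : Summable fun i => a i * g i :=
  ha.of_norm_bounded fun i =>
    (norm_mul_le _ _).trans (mul_le_of_le_one_right (norm_nonneg _) (hg i))

theorem norm_div_le_one_of_le {𝕜 : Type*} [NormedDivisionRing 𝕜] {x y : 𝕜} (hxy : ‖x‖ ≤ ‖y‖) :
    ‖x / y‖ ≤ 1 := by
  rw [norm_div]
  exact div_le_one_of_le₀ hxy (norm_nonneg _)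

theorem norm_mul_ofReal_le_norm (c : ℂ) {x : ℝ} (hx : |x| ≤ 1) : ‖c * (x : ℂ)‖ ≤ ‖c‖ := by
  rw [norm_mul, Complex.norm_real, Real.norm_eq_abs]
  exact mul_le_of_le_one_right (norm_nonneg _) hx

namespace Polynomial.Chebyshev

theorem hasDerivAt_eval_T (n : ℤ) (x : ℝ) :
    HasDerivAt (fun y => (T ℝ n).eval y) (n * (U ℝ (n - 1)).eval x) x := by
  simpa [T_derivative_eq_U] using (T ℝ n).hasDerivAt x

theorem hasDerivAt_T_antideriv {n : ℤ} (h₁ : (n : ℝ) + 1 ≠ 0) (h₂ : (n : ℝ) - 1 ≠ 0) (x : ℝ) :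
    HasDerivAt
      (fun y => (T ℝ (n + 1)).eval y / (2 * (n + 1)) - (T ℝ (n - 1)).eval y / (2 * (n - 1)))
      ((T ℝ n).eval x) x := by
  have hT : 2 * (T ℝ n).eval x = (U ℝ n).eval x - (U ℝ (n - 2)).eval x := by
    simpa using congrArg (eval x) (two_mul_T_eq_U_sub_U ℝ (n - 2))
  refine (((hasDerivAt_eval_T (n + 1) x).div_const _).sub
    ((hasDerivAt_eval_T (n - 1) x).div_const _)).congr_deriv ?_
  push_cast
  rw [show n + 1 - 1 = n by ring, show n - 1 - 1 = n - 2 by ring]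
  field_simp
  linear_combination -hT

theorem integral_eval_T_add_two (n : ℕ) (t : ℝ) :
    ∫ r in (-1 : ℝ)..t, (T ℝ ((n : ℤ) + 2)).eval r =
      (T ℝ ((n : ℤ) + 3)).eval t / (2 * ((n : ℝ) + 3))
        - (T ℝ ((n : ℤ) + 1)).eval t / (2 * ((n : ℝ) + 1))
        - (-1) ^ n / (((n : ℝ) + 2) ^ 2 - 1) := by
  have hn : (0 : ℝ) ≤ n := n.cast_nonneg
  have h₁ : (n : ℝ) + 2 + 1 ≠ 0 := by positivity
  have h₂ : (n : ℝ) + 2 - 1 ≠ 0 := by linarith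
  have h : ((n : ℝ) + 2) ^ 2 - 1 ≠ 0 := by nlinarith
  rw [intervalIntegral.integral_eq_sub_of_hasDerivAt
    (fun x _ => hasDerivAt_T_antideriv (n := (n : ℤ) + 2) (by exact_mod_cast h₁)
      (by exact_mod_cast h₂) x)
    ((T ℝ _).continuous.intervalIntegrable _ _)]
  have e₃ : (n : ℤ) + 2 + 1 = ((n + 3 : ℕ) : ℤ) := by push_cast; ring
  have e₁ : (n : ℤ) + 2 - 1 = ((n + 1 : ℕ) : ℤ) := by push_cast; ring
  simp only [e₃, e₁, T_eval_neg_one, Int.cast_negOnePow_natCast]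
  push_cast
  field_simp
  ring

theorem integral_eval_T_one (t : ℝ) :
    ∫ r in (-1 : ℝ)..t, (T ℝ 1).eval r = (T ℝ 2).eval t / 4 - 1 / 4 := by
  simp only [T_one, T_two, eval_X, eval_sub, eval_mul, eval_ofNat, eval_pow, eval_one,
    integral_id]
  ring

end Polynomial.Chebyshev

section TermwiseIntegration

variable {c : ℕ → ℂ} {F : ℕ → ℝ → ℝ}

theorem continuousOn_tsum_mul_ofReal (hc : Summable fun n => ‖c n‖) {s : Set ℝ}
    (hF : ∀ n, ContinuousOn (F n) s) (hF₁ : ∀ n, ∀ r ∈ s, |F n r| ≤ 1) :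
    ContinuousOn (fun r => ∑' n, c n * (F n r : ℂ)) s :=
  continuousOn_tsum (fun n => by have := hF n; fun_prop) hc
    fun n r hr => norm_mul_ofReal_le_norm _ (hF₁ n r hr)

theorem intervalIntegral_tsum_mul_ofReal (hc : Summable fun n => ‖c n‖) {x y : ℝ}
    (hF : ∀ n, ContinuousOn (F n) (uIcc x y)) (hF₁ : ∀ n, ∀ r ∈ uIcc x y, |F n r| ≤ 1) :
    ∫ r in x..y, ∑' n, c n * (F n r : ℂ) = ∑' n, c n * ∫ r in x..y, F n r := by
  have hterm : ∀ n, ContinuousOn (fun r => c n * (F n r : ℂ)) (uIcc x y) := fun n => by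
    have := hF n
    fun_prop
  have hle : ∀ n, ∀ r ∈ uIoc x y, ‖c n * (F n r : ℂ)‖ ≤ ‖c n‖ := fun n r hr =>
    norm_mul_ofReal_le_norm _ (hF₁ n r (uIoc_subset_uIcc hr))
  have hsum := intervalIntegral.hasSum_integral_of_dominated_convergence (μ := MeasureTheory.volume)
    (fun n _ => ‖c n‖)
    (fun n => ((hterm n).mono uIoc_subset_uIcc).aestronglyMeasurable measurableSet_uIoc)
    (fun n => .of_forall (hle n)) (.of_forall fun _ _ => hc) intervalIntegrable_const
    (.of_forall fun r hr => (hc.of_norm_bounded fun n => hle n r hr).hasSum)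
  rw [← hsum.tsum_eq]
  congr with n
  rw [intervalIntegral.integral_const_mul, intervalIntegral.integral_ofReal]

end TermwiseIntegration

theorem one_le_norm_two_mul_natCast_add_one (n : ℕ) : 1 ≤ ‖2 * ((n : ℂ) + 1)‖ := by
  rw [show 2 * ((n : ℂ) + 1) = ((2 * n + 2 : ℕ) : ℂ) by push_cast; ring, Complex.norm_natCast]
  exact_mod_cast (by omega : 1 ≤ 2 * n + 2)

theorem norm_neg_one_pow_div_sq_sub_one_le_one (n : ℕ) :
    ‖(-1 : ℂ) ^ n / (((n : ℂ) + 2) ^ 2 - 1)‖ ≤ 1 := by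
  refine norm_div_le_one_of_le ?_
  rw [show ((n : ℂ) + 2) ^ 2 - 1 = ((n ^ 2 + 4 * n + 3 : ℕ) : ℂ) by push_cast; ring,
    Complex.norm_natCast, norm_pow, norm_neg, norm_one, one_pow]
  exact_mod_cast (by omega : 1 ≤ n ^ 2 + 4 * n + 3)

theorem summable_norm_chebIntegrate {a : ℕ → ℂ} (ha : Summable fun n => ‖a n‖) :
    Summable fun n => ‖chebIntegrate a n‖ := by
  refine (summable_nat_add_iff 1).1 <| (ha.add ((summable_nat_add_iff 2).2 ha)).of_nonneg_of_le
    (fun _ => norm_nonneg _) fun n => ?_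
  calc ‖chebIntegrate a (n + 1)‖ = ‖a n - a (n + 2)‖ / ‖2 * ((n : ℂ) + 1)‖ := norm_div _ _
    _ ≤ ‖a n - a (n + 2)‖ := div_le_self (norm_nonneg _) (one_le_norm_two_mul_natCast_add_one n)
    _ ≤ ‖a n‖ + ‖a (n + 2)‖ := norm_sub_le _ _

theorem chebIntegrate_zero_eq (a : ℕ → ℂ) :
    chebIntegrate a 0 =
      a 0 - a 1 / 2 - 2 * ∑' n : ℕ, a (n + 2) * ((-1) ^ n / (((n : ℂ) + 2) ^ 2 - 1)) := by
  simp only [chebIntegrate]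
  congr 3
  funext n
  push_cast
  ring

/-- `τ n` stands for `T_n(t)` and `I n` for `∫_{-1}^t T_n`. -/
theorem add_tsum_mul_antideriv_eq_chebIntegrate {a : ℕ → ℂ} (ha : Summable fun n => ‖a n‖)
    {τ I : ℤ → ℂ} (hτ : ∀ n, ‖τ n‖ ≤ 1) (hI₁ : I 1 = τ 2 / 4 - 1 / 4)
    (hI : ∀ n : ℕ, I ((n : ℤ) + 2) = τ ((n : ℤ) + 3) / (2 * ((n : ℂ) + 3))
      - τ ((n : ℤ) + 1) / (2 * ((n : ℂ) + 1)) - (-1) ^ n / (((n : ℂ) + 2) ^ 2 - 1)) :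
    a 0 * (τ 1 + 1) + 2 * ∑' n : ℕ, a (n + 1) * I ((n : ℤ) + 1) =
      chebIntegrate a 0 + 2 * ∑' n : ℕ, chebIntegrate a (n + 1) * τ ((n : ℤ) + 1) := by
  set g : ℕ → ℂ := fun n => τ ((n : ℤ) + 1) / (2 * ((n : ℂ) + 1)) with hg_def
  set w : ℕ → ℂ := fun n => (-1) ^ n / (((n : ℂ) + 2) ^ 2 - 1) with hw_def
  have hg : ∀ n, ‖g n‖ ≤ 1 := fun n =>
    norm_div_le_one_of_le <| (hτ _).trans (one_le_norm_two_mul_natCast_add_one n)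
  have ha₂ : Summable fun n => ‖a (n + 2)‖ := (summable_nat_add_iff 2).2 ha
  have hu : Summable fun n => a n * g n := ha.mul_of_norm_le_one hg
  have hu₂ : Summable fun n => a (n + 2) * g (n + 2) := (summable_nat_add_iff 2).2 hu
  have hv : Summable fun n => a (n + 2) * g n := ha₂.mul_of_norm_le_one hg
  have hw : Summable fun n => a (n + 2) * w n :=
    ha₂.mul_of_norm_le_one norm_neg_one_pow_div_sq_sub_one_le_one
  have hterm : ∀ n : ℕ, a (n + 1 + 1) * I (((n + 1 : ℕ) : ℤ) + 1) =
      a (n + 2) * g (n + 2) - a (n + 2) * g n - a (n + 2) * w n := by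
    intro n
    rw [show ((n + 1 : ℕ) : ℤ) + 1 = (n : ℤ) + 2 by push_cast; ring, hI]
    simp only [hg_def, hw_def]
    push_cast
    ring_nf
  have hIsum : Summable fun n : ℕ => a (n + 1) * I ((n : ℤ) + 1) :=
    (summable_nat_add_iff 1).1 <| ((hu₂.sub hv).sub hw).congr fun n => by simpa using (hterm n).symm
  have hS : ∀ n : ℕ, chebIntegrate a (n + 1) * τ ((n : ℤ) + 1) = a n * g n - a (n + 2) * g n := by
    intro n
    simp only [chebIntegrate, hg_def]
    ring
  have hu₀ : a 0 * g 0 = a 0 * τ 1 / 2 := by norm_num [hg_def]; ring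
  have hu₁ : a 1 * g 1 = a 1 * τ 2 / 4 := by norm_num [hg_def]; ring
  rw [hIsum.tsum_eq_zero_add, tsum_congr hterm, (hu₂.sub hv).tsum_sub hw, hu₂.tsum_sub hv,
    tsum_congr hS, hu.tsum_sub hv, ← hu.sum_add_tsum_nat_add 2, chebIntegrate_zero_eq]
  simp only [Finset.sum_range_succ, Finset.sum_range_zero, hu₀, hu₁]
  push_cast
  rw [hI₁]
  ring

theorem integral_chebSeries_eq_tsum {a : ℕ → ℂ} (ha : Summable fun n => ‖a n‖) {t : ℝ}
    (ht : t ∈ Icc (-1 : ℝ) 1) :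
    ∫ r in (-1 : ℝ)..t, chebSeries a r =
      a 0 * (t + 1) + 2 * ∑' n : ℕ, a (n + 1) * ∫ r in (-1 : ℝ)..t, (T ℝ ((n : ℤ) + 1)).eval r := by
  have hsub : uIcc (-1) t ⊆ Icc (-1 : ℝ) 1 := uIcc_subset_Icc (left_mem_Icc.2 (by norm_num)) ht
  have hcont : ∀ n : ℕ, ContinuousOn (fun r => (T ℝ ((n : ℤ) + 1)).eval r) (uIcc (-1) t) :=
    fun n => (T ℝ _).continuous.continuousOn
  have hbound : ∀ n : ℕ, ∀ r ∈ uIcc (-1) t, |(T ℝ ((n : ℤ) + 1)).eval r| ≤ 1 :=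
    fun n r hr => abs_eval_T_real_le_one _ (abs_le.2 (hsub hr))
  have ha₁ : Summable fun n => ‖a (n + 1)‖ := (summable_nat_add_iff 1).2 ha
  simp only [chebSeries]
  rw [intervalIntegral.integral_add intervalIntegrable_const
      (((continuousOn_tsum_mul_ofReal ha₁ hcont hbound).intervalIntegrable).const_mul 2),
    intervalIntegral.integral_const, intervalIntegral.integral_const_mul,
    intervalIntegral_tsum_mul_ofReal ha₁ hcont hbound, Complex.real_smul]
  push_cast
  ring

theorem integral_chebSeries {a : ℕ → ℂ} (ha : Summable fun n => ‖a n‖) {t : ℝ}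
    (ht : t ∈ Icc (-1 : ℝ) 1) :
    ∫ r in (-1 : ℝ)..t, chebSeries a r = chebSeries (chebIntegrate a) t := by
  have hT₁ : (((T ℝ 1).eval t : ℝ) : ℂ) = t := by simp
  rw [integral_chebSeries_eq_tsum ha ht, ← hT₁]
  refine add_tsum_mul_antideriv_eq_chebIntegrate ha (τ := fun n => (((T ℝ n).eval t : ℝ) : ℂ))
    (I := fun n => ((∫ r in (-1 : ℝ)..t, (T ℝ n).eval r : ℝ) : ℂ)) (fun n => ?_) ?_ fun n => ?_
  · rw [Complex.norm_real, Real.norm_eq_abs]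
    exact abs_eval_T_real_le_one n (abs_le.2 ht)
  · simp only [integral_eval_T_one]
    push_cast
    ring
  · simp only [integral_eval_T_add_two]
    push_cast
    ring

/-- the operator `S` represents integration from `−1`.
If `a` is an absolutely summable Chebyshev coefficient sequence representing
`f` on `[−1, 1]`, then `S(a)` is absolutely summable and represents
`t ↦ ∫_{−1}^t f`. Here `T_α` is the Chebyshev polynomial of the first kind. -/
theorem chebIntegrate_represents_integral
    (a : ℕ → ℂ) (ha : Summable fun α : ℕ => ‖a α‖) :
    (Summable fun α : ℕ => ‖chebIntegrate a α‖) ∧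
    ∀ t ∈ Set.Icc (-1 : ℝ) 1,
      (∫ r in (-1 : ℝ)..t,
          (a 0 + 2 * ∑' α : ℕ,
            a (α + 1) * (((Polynomial.Chebyshev.T ℝ ((α : ℤ) + 1)).eval r : ℝ) : ℂ)))
        = chebIntegrate a 0 + 2 * ∑' α : ℕ,
            chebIntegrate a (α + 1) *
              (((Polynomial.Chebyshev.T ℝ ((α : ℤ) + 1)).eval t : ℝ) : ℂ) :=
  ⟨summable_norm_chebIntegrate ha, fun _ ht => integral_chebSeries ha ht⟩
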